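/- For all r ≥ 1 and all partitions λ ∈ 𝒫_r, the equality σ̄_{−r+1}(β₀ ⌟ [b]^r_λ) = Δ_λ(H_{r−1}) · [b]^{r−1}_0 = φ_{r−1}(Δ_λ(H_{r−1})) holds in ⋀^{r−1}M₀, where Δ_λ(H_{r−1}) := det(h_{λ_j−j+i})_{1≤i,j≤r} is computed with the h's of B_{r−1} (in particular both sides vanish when λ has length r, i.e. λ_r > 0). -/

import Mathlib

open ExteriorAlgebra

/-- The free `ℤ`-module `M₀` with basis indexed by `ℕ`. -/
abbrev M₀ : Type := ℕ →₀ ℤ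

/-- The exterior algebra `⋀M₀`. -/
abbrev ExtM₀ : Type := ExteriorAlgebra ℤ M₀

/-- The basis vectors `b i` of `M₀`, seen inside the exterior algebra. -/
noncomputable def b (i : ℕ) : ExtM₀ := ExteriorAlgebra.ι ℤ (Finsupp.single i 1)

/-- A family `D : ℕ → End(⋀M)` is a Hasse–Schmidt family if the series
`𝒟(z) = Σ Dₙ zⁿ` is an algebra homomorphism `⋀M → ⋀M[[z]]`. -/
def IsHSFamily {R : Type*} [CommRing R] {M : Type*} [AddCommGroup M] [Module R M]
    (D : ℕ → Module.End R (ExteriorAlgebra R M)) : Prop :=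
  (∀ (n : ℕ) (x y : ExteriorAlgebra R M),
      D n (x * y) = ∑ p ∈ Finset.HasAntidiagonal.antidiagonal n, (D p.1 x) * (D p.2 y)) ∧
  (∀ n : ℕ, D n (1 : ExteriorAlgebra R M) = if n = 0 then 1 else 0)

/-- `σ₊(z) = Σ σᵢ zⁱ`: the HS derivation with `σᵢ bⱼ = b_{i+j}`. -/
def IsSigmaPlus (D : ℕ → Module.End ℤ ExtM₀) : Prop :=
  IsHSFamily D ∧ ∀ i j : ℕ, D i (b j) = b (i + j)

/-- `σ̄₊(z) = Σ (-1)ⁱ σ̄ᵢ zⁱ`: the (coefficientwise) HS derivation with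
`σ̄₊(z) bⱼ = bⱼ - b_{j+1} z`.  Here `D i` is the coefficient of `zⁱ`, i.e. `D i = (-1)ⁱ σ̄ᵢ`. -/
def IsSigmaBarPlus (D : ℕ → Module.End ℤ ExtM₀) : Prop :=
  IsHSFamily D ∧ (∀ j, D 0 (b j) = b j) ∧ (∀ j, D 1 (b j) = -b (j + 1)) ∧
    (∀ i j, 2 ≤ i → D i (b j) = 0)

/-- `σ₋(z) = Σ σ₋ᵢ z⁻ⁱ`: the HS derivation with `σ₋ᵢ bⱼ = b_{j-i}` (`0` if `i > j`).
Here `D i` is the coefficient of `z⁻ⁱ`. -/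
def IsSigmaMinus (D : ℕ → Module.End ℤ ExtM₀) : Prop :=
  IsHSFamily D ∧ ∀ i j : ℕ, D i (b j) = if i ≤ j then b (j - i) else 0

/-- `σ̄₋(z) = Σ (-1)ⁱ σ̄₋ᵢ z⁻ⁱ`: the HS derivation with `σ̄₋(z) bⱼ = bⱼ - b_{j-1} z⁻¹`
(with `b_{-1} = 0`).  Here `D i` is the coefficient of `z⁻ⁱ`. -/
def IsSigmaBarMinus (D : ℕ → Module.End ℤ ExtM₀) : Prop :=
  IsHSFamily D ∧ (∀ j, D 0 (b j) = b j) ∧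
    (∀ j, D 1 (b j) = -(if 1 ≤ j then b (j - 1) else 0)) ∧
    (∀ i j, 2 ≤ i → D i (b j) = 0)

/-- The basis element `[b]^r_λ = b_{λ_r} ∧ b_{1+λ_{r-1}} ∧ ⋯ ∧ b_{r-1+λ_1}` of `⋀^r M₀`,
for a partition `λ` encoded as an antitone function `lam : Fin r → ℕ` (`lam 0 = λ₁`). -/
noncomputable def bwedge (r : ℕ) (lam : Fin r → ℕ) : ExtM₀ :=
  (List.ofFn fun i : Fin r => b (i.1 + lam i.rev)).prod

/-- The Grassmann cone `𝒢_r ⊆ ⋀^r M₀` of decomposable tensors. -/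
def GrassmannCone (r : ℕ) : Set ExtM₀ :=
  {x | ∃ v : Fin r → M₀, x = (List.ofFn fun i : Fin r => ExteriorAlgebra.ι ℤ (v i)).prod}

/-- The dual basis functional `β_j ∈ M₀*`, `β_j (b_i) = δ_{ij}`. -/
noncomputable def beta (j : ℕ) : Module.Dual ℤ M₀ := Finsupp.lapply j

/-- Contraction `β ⌟ x` of `x ∈ ⋀M₀` against a functional `β ∈ M₀^∨`: the unique odd
derivation of degree `-1` of `⋀M₀` extending `β`. -/
noncomputable def contract (β : Module.Dual ℤ M₀) (x : ExtM₀) : ExtM₀ :=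
  CliffordAlgebra.contractLeft β x

/-- `E_r(z) = 1 - e₁z + ⋯ + (-1)^r e_r z^r ∈ B_r[[z]]`, where `B_r = ℤ[e₁,…,e_r]` is
`MvPolynomial (Fin r) ℤ` (the variable `X i` is `e_{i+1}`). -/
noncomputable def Epow (r : ℕ) : PowerSeries (MvPolynomial (Fin r) ℤ) :=
  1 + ∑ i : Fin r,
    PowerSeries.monomial (i.1 + 1)
      ((-1 : MvPolynomial (Fin r) ℤ) ^ (i.1 + 1) * MvPolynomial.X i)

/-- The coefficient of `z^k` in `E_r(z)`. -/
noncomputable def Ecoeff (r k : ℕ) : MvPolynomial (Fin r) ℤ :=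
  PowerSeries.coeff (R := MvPolynomial (Fin r) ℤ) k (Epow r)

/-- The complete-homogeneous elements `h_n ∈ B_r` (for `n : ℤ`, with `h_n = 0` for `n < 0`),
defined by `Σ_{n≥0} h_n z^n = 1/E_r(z)`. -/
noncomputable def hp (r : ℕ) (n : ℤ) : MvPolynomial (Fin r) ℤ :=
  if 0 ≤ n then PowerSeries.coeff (R := MvPolynomial (Fin r) ℤ) n.toNat ((Epow r).invOfUnit 1) else 0

/-- The Schur determinant `Δ_λ(H_s) = det(h_{λ_j - j + i})_{1≤i,j≤r}` computed with the `h`'s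
of `B_s`, for a partition `λ` with (at most) `r` parts, encoded as `lam : Fin r → ℕ`. -/
noncomputable def schurDet (s r : ℕ) (lam : Fin r → ℕ) : MvPolynomial (Fin s) ℤ :=
  Matrix.det (fun i j : Fin r => hp s ((lam j : ℤ) - (j : ℤ) + (i : ℤ)))

/-- `σ₋(z) h_n = Σ_{j=0}^{n} h_{n-j} z^{-j}`, as a polynomial in the variable `X = z⁻¹` with
coefficients in `B_s` (and `σ₋(z)h_n = 0` for `n < 0`, `σ₋(z)h_0 = 1`). -/
noncomputable def smH (s : ℕ) (n : ℤ) : Polynomial (MvPolynomial (Fin s) ℤ) :=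
  if 0 ≤ n then
    ∑ j ∈ Finset.range (n.toNat + 1), Polynomial.C (hp s (n - j)) * Polynomial.X ^ j
  else 0

/-- `σ̄₋(z) h_n = h_n - h_{n-1} z⁻¹`, as a polynomial in the variable `X = z⁻¹` with
coefficients in `B_s`. -/
noncomputable def sbmH (s : ℕ) (n : ℤ) : Polynomial (MvPolynomial (Fin s) ℤ) :=
  Polynomial.C (hp s n) - Polynomial.C (hp s (n - 1)) * Polynomial.X

lemma Ecoeff_zero (s : ℕ) : Ecoeff s 0 = 1 := by
  simp only [Ecoeff, Epow, map_add, map_sum, PowerSeries.coeff_one,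
    PowerSeries.coeff_monomial]
  rw [Finset.sum_eq_zero (fun i _ => by rw [if_neg (by omega)]), add_zero]
  simp

lemma Ecoeff_eq_zero (s k : ℕ) (h : s < k) : Ecoeff s k = 0 := by
  simp only [Ecoeff, Epow, map_add, map_sum, PowerSeries.coeff_one,
    PowerSeries.coeff_monomial]
  rw [if_neg (by omega), Finset.sum_eq_zero (fun i _ => by
    rw [if_neg (by have := i.2; omega)]), add_zero]

lemma hp_neg (s : ℕ) (n : ℤ) (h : n < 0) : hp s n = 0 := if_neg (by omega)

lemma constCoeff_Epow (s : ℕ) :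
    PowerSeries.constantCoeff (R := MvPolynomial (Fin s) ℤ) (Epow s) = 1 := by
  rw [← PowerSeries.coeff_zero_eq_constantCoeff_apply]
  exact Ecoeff_zero s

lemma hp_zero (s : ℕ) : hp s 0 = 1 := by
  rw [hp, if_pos le_rfl]
  show PowerSeries.coeff 0 _ = 1
  rw [PowerSeries.coeff_zero_eq_constantCoeff_apply,
    PowerSeries.constantCoeff_invOfUnit]
  simp

lemma hp_rec (s : ℕ) (m : ℤ) (hm : 1 ≤ m) :
    ∑ k ∈ Finset.range (s + 1), Ecoeff s k * hp s (m - k) = 0 := by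
  set N := m.toNat with hN
  have h1 : Epow s * (Epow s).invOfUnit 1 = 1 :=
    PowerSeries.mul_invOfUnit _ 1 (by rw [constCoeff_Epow]; rfl)
  have h2 : ∑ k ∈ Finset.range (N + 1),
      Ecoeff s k * PowerSeries.coeff (N - k) ((Epow s).invOfUnit 1) = 0 := by
    have h3 := congrArg (PowerSeries.coeff N) h1
    rw [PowerSeries.coeff_mul, PowerSeries.coeff_one, if_neg (by omega),
      Finset.Nat.sum_antidiagonal_eq_sum_range_succ_mk] at h3
    exact h3
  have key : ∀ k, k ≤ N → Ecoeff s k * hp s (m - k) =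
      Ecoeff s k * PowerSeries.coeff (N - k) ((Epow s).invOfUnit 1) := by
    intro k hk
    rw [hp, if_pos (by omega)]
    have hknat : (m - (k : ℕ)).toNat = N - k := by omega
    rw [hknat]
  have e1 : ∑ k ∈ Finset.range (s + 1), Ecoeff s k * hp s (m - k) =
      ∑ k ∈ Finset.range (s + N + 1), Ecoeff s k * hp s (m - k) := by
    refine Finset.sum_subset (Finset.range_subset_range.2 (by omega)) ?_
    intro k _ hk
    simp only [Finset.mem_range, not_lt] at hk
    rw [Ecoeff_eq_zero s k (by omega), zero_mul]
  have e2 : ∑ k ∈ Finset.range (N + 1), Ecoeff s k * hp s (m - k) =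
      ∑ k ∈ Finset.range (s + N + 1), Ecoeff s k * hp s (m - k) := by
    refine Finset.sum_subset (Finset.range_subset_range.2 (by omega)) ?_
    intro k _ hk
    simp only [Finset.mem_range, not_lt] at hk
    rw [hp_neg s _ (by omega), mul_zero]
  rw [e1, ← e2]
  rw [Finset.sum_congr rfl fun k hk => key k (by
    simp only [Finset.mem_range] at hk; omega)]
  exact h2

lemma schur_vanish (n : ℕ) (lam : Fin (n + 1) → ℕ) (hpos : ∀ j, 1 ≤ lam j) :
    schurDet n (n + 1) lam = 0 := by
  classical
  rw [schurDet]
  refine (Matrix.det_transpose _).symm.trans ?_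
  refine (Matrix.exists_mulVec_eq_zero_iff).mp ?_
  refine ⟨fun i => Ecoeff n (n - i.1), ?_, ?_⟩
  · intro h0
    have h1 := congrFun h0 (Fin.last n)
    simp only [Fin.val_last, Nat.sub_self, Pi.zero_apply] at h1
    rw [Ecoeff_zero] at h1
    exact one_ne_zero h1
  · funext j
    simp only [Matrix.mulVec, dotProduct, Matrix.transpose_apply, Pi.zero_apply]
    have e1 := Fin.sum_univ_eq_sum_range
      (fun k : ℕ => hp n ((lam j : ℤ) - (j : ℤ) + (k : ℤ)) * Ecoeff n (n - k)) (n + 1)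
    refine Eq.trans (Eq.trans ?_ e1) ?_
    · rfl
    · rw [← Finset.sum_range_reflect]
      refine Eq.trans (Finset.sum_congr rfl (fun k hk => ?_))
        (hp_rec n ((lam j : ℤ) - (j : ℤ) + (n : ℤ))
          (by have := j.2; have := hpos j; omega))
      simp only [Finset.mem_range] at hk
      have h5 : ((n + 1 - 1 - k : ℕ) : ℤ) = (n : ℤ) - (k : ℤ) := by omega
      have h6 : n - (n + 1 - 1 - k) = k := by omega
      rw [h5, h6, mul_comm]
      ring_nf

lemma schur_reduce (n : ℕ) (lam : Fin (n + 1) → ℕ) (hlast : lam (Fin.last n) = 0) :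
    schurDet n (n + 1) lam = schurDet n n (fun j => lam j.castSucc) := by
  classical
  rw [schurDet]
  refine (Matrix.det_succ_column _ (Fin.last n)).trans ?_
  rw [Finset.sum_eq_single (Fin.last n)]
  · rw [hlast]
    have hm : (Matrix.submatrix (fun i j : Fin (n + 1) => hp n ((lam j : ℤ) - (j : ℤ) + (i : ℤ)))
        (Fin.last n).succAbove (Fin.last n).succAbove) =
        fun i j : Fin n => hp n (((fun j : Fin n => lam j.castSucc) j : ℤ) - (j : ℤ) + (i : ℤ)) := by
      funext i j
      simp only [Fin.succAbove_last]
      rfl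
    rw [hm]
    have h2 : ((0 : ℕ) : ℤ) - ((Fin.last n : Fin (n + 1)) : ℤ) + ((Fin.last n : Fin (n + 1)) : ℤ)
        = 0 := by ring
    rw [h2, hp_zero, mul_one]
    have h3 : ((Fin.last n : Fin (n + 1)).1 + (Fin.last n : Fin (n + 1)).1) = n + n := rfl
    rw [h3, Even.neg_one_pow (Even.add_self n), one_mul, schurDet]
  · intro i _ hi
    rw [hlast]
    have h7 : hp n (((0 : ℕ) : ℤ) - ((Fin.last n : Fin (n + 1)) : ℤ) + (i : ℤ)) = 0 := by
      refine hp_neg n _ ?_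
      have h2 : i.1 < n := by
        have h8 := i.2
        rcases Nat.lt_succ_iff_lt_or_eq.mp h8 with h | h
        · exact h
        · exact absurd (Fin.ext h) hi
      simp only [Fin.val_last]
      push_cast
      omega
    rw [h7, mul_zero, zero_mul]
  · intro h; exact absurd (Finset.mem_univ _) h

lemma beta_zero_single (j : ℕ) :
    beta 0 (Finsupp.single j (1 : ℤ)) = if j = 0 then 1 else 0 := by
  simp [beta, Finsupp.single_apply]

lemma contract_b_mul (j : ℕ) (x : ExtM₀) :
    contract (beta 0) (b j * x) =
      (if j = 0 then (1 : ℤ) else 0) • x - b j * contract (beta 0) x := by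
  rw [contract, contract, b, ← beta_zero_single j]
  exact CliffordAlgebra.contractLeft_ι_mul _ _ _

lemma contract_prod_zero (L : List ℕ) (hL : ∀ j ∈ L, j ≠ 0) :
    contract (beta 0) ((L.map b).prod) = 0 := by
  induction L with
  | nil =>
      show contract (beta 0) 1 = 0
      rw [contract]
      exact CliffordAlgebra.contractLeft_one _ _
  | cons j t ih =>
      rw [List.map_cons, List.prod_cons, contract_b_mul,
        if_neg (hL j (List.mem_cons_self)),
        ih (fun i hi => hL i (List.mem_cons_of_mem _ hi))]
      simp

lemma sbm_prod_small (D : ℕ → Module.End ℤ ExtM₀) (hD : IsSigmaBarMinus D) :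
    ∀ (L : List ℕ) (n : ℕ), L.length < n → D n ((L.map b).prod) = 0 := by
  intro L
  induction L with
  | nil =>
      intro n hn
      show D n 1 = 0
      rw [hD.1.2, if_neg (by omega)]
  | cons j t ih =>
      intro n hn
      rw [List.map_cons, List.prod_cons, hD.1.1]
      refine Finset.sum_eq_zero ?_
      rintro ⟨p, q⟩ hpq
      rw [Finset.HasAntidiagonal.mem_antidiagonal] at hpq
      simp only [List.length_cons] at hn
      match p, hpq with
      | 0, hpq =>
          rw [ih q (by omega), mul_zero]
      | 1, hpq =>
          rw [ih q (by omega), mul_zero]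
      | (p + 2), hpq =>
          rw [hD.2.2.2 (p + 2) j (by omega), zero_mul]

lemma sbm_prod_top (D : ℕ → Module.End ℤ ExtM₀) (hD : IsSigmaBarMinus D) :
    ∀ L : List ℕ, (∀ j ∈ L, 1 ≤ j) →
      D L.length ((L.map b).prod) =
        ((-1 : ℤ) ^ L.length) • ((L.map fun j => b (j - 1)).prod) := by
  intro L
  induction L with
  | nil =>
      intro _
      show D 0 1 = _
      rw [hD.1.2, if_pos rfl]
      simp
  | cons j t ih =>
      intro hL
      rw [List.map_cons, List.prod_cons, hD.1.1]
      rw [Finset.sum_eq_single (1, t.length)]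
      · rw [hD.2.2.1 j, if_pos (hL j (List.mem_cons_self)),
          ih (fun i hi => hL i (List.mem_cons_of_mem _ hi))]
        rw [List.length_cons, List.map_cons, List.prod_cons]
        rw [mul_smul_comm, neg_mul]
        rw [smul_neg, ← neg_smul,
          show -((-1 : ℤ) ^ t.length) = (-1 : ℤ) ^ (t.length + 1) by ring]
      · rintro ⟨p, q⟩ hpq hne
        rw [Finset.HasAntidiagonal.mem_antidiagonal] at hpq
        simp only [List.length_cons] at *
        match p, hpq with
        | 0, hpq =>
            rw [sbm_prod_small D hD t q (by omega), mul_zero]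
        | 1, hpq =>
            exact absurd (by simp; omega) hne
        | (p + 2), hpq =>
            rw [hD.2.2.2 (p + 2) j (by omega), zero_mul]
      · intro h
        exact absurd (by rw [Finset.HasAntidiagonal.mem_antidiagonal, List.length_cons]; omega) h


/--
for all `r ≥ 1` and all partitions `λ ∈ 𝒫_r`,
`σ̄_{-r+1}(β₀ ⌟ [b]^r_λ) = Δ_λ(H_{r-1}) · [b]^{r-1}_0 = φ_{r-1}(Δ_λ(H_{r-1}))` in
`⋀^{r-1}M₀`, where `Δ_λ(H_{r-1}) = det(h_{λ_j-j+i})_{1≤i,j≤r}` is the `r × r` Schur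
determinant computed with the `h`'s of `B_{r-1}` (both sides vanish when `λ_r > 0`).
Here `σ̄_{-(r-1)} = (-1)^{r-1} • sbm (r-1)` where `sbm i` is the coefficient of `z⁻ⁱ`
in `σ̄₋(z)`, and `φ_{r-1} : B_{r-1} → ⋀^{r-1}M₀` is the group isomorphism
`Δ_μ(H_{r-1}) ↦ [b]^{r-1}_μ`.
-/
theorem contraction_beta0_on_basis
    (r : ℕ) (hr : 1 ≤ r) (lam : Fin r → ℕ) (hlam : Antitone lam)
    (sbm : ℕ → Module.End ℤ ExtM₀) (hsbm : IsSigmaBarMinus sbm)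
    (φ : MvPolynomial (Fin (r - 1)) ℤ →ₗ[ℤ] ExtM₀)
    (hφ : ∀ mu : Fin (r - 1) → ℕ, Antitone mu →
      φ (schurDet (r - 1) (r - 1) mu) = bwedge (r - 1) mu) :
    ((-1 : ℤ) ^ (r - 1)) • sbm (r - 1) (contract (beta 0) (bwedge r lam)) =
      φ (schurDet (r - 1) r lam) := by
  obtain ⟨n, rfl⟩ : ∃ n, r = n + 1 := ⟨r - 1, by omega⟩
  clear hr
  show ((-1 : ℤ) ^ n) • sbm n (contract (beta 0) (bwedge (n + 1) lam)) =
    φ (schurDet n (n + 1) lam)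
  set g : Fin (n + 1) → ℕ := fun i => i.1 + lam i.rev with hg
  have hbw : bwedge (n + 1) lam = ((List.ofFn g).map b).prod := by
    rw [bwedge, List.map_ofFn]
    rfl
  have hofn : List.ofFn g = g 0 :: List.ofFn (fun i : Fin n => g i.succ) := List.ofFn_succ (f := g)
  have hg0 : g 0 = lam (Fin.last n) := by
    simp only [hg, Fin.val_zero, zero_add, Fin.rev_zero]
  set t : List ℕ := List.ofFn (fun i : Fin n => g i.succ) with ht
  have htpos : ∀ j ∈ t, 1 ≤ j := by
    intro j hj
    rw [ht, List.mem_ofFn] at hj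
    obtain ⟨i, rfl⟩ := hj
    simp only [hg, Fin.val_succ]
    omega
  have htlen : t.length = n := by simp [ht]
  by_cases h0 : lam (Fin.last n) = 0
  · -- last part of the partition is zero
    have hc : contract (beta 0) (bwedge (n + 1) lam) = (t.map b).prod := by
      rw [hbw, hofn, List.map_cons, List.prod_cons, contract_b_mul, hg0, h0, if_pos rfl,
        contract_prod_zero t (fun j hj => by have := htpos j hj; omega), mul_zero, sub_zero,
        one_smul]
    have hD := sbm_prod_top sbm hsbm t htpos
    rw [htlen] at hD
    rw [hc, hD, smul_smul, show ((-1 : ℤ) ^ n * (-1) ^ n = 1) by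
      rw [← mul_pow]; norm_num, one_smul]
    have hrev : ∀ i : Fin n, Fin.rev i.succ = (Fin.rev i).castSucc := by
      intro i
      apply Fin.ext
      simp only [Fin.val_rev, Fin.val_succ, Fin.coe_castSucc]
      omega
    have hmu : (t.map fun j => b (j - 1)).prod = bwedge n (fun j => lam j.castSucc) := by
      rw [ht, List.map_ofFn, bwedge]
      congr 1
      refine congrArg List.ofFn (funext fun i => ?_)
      show b (g i.succ - 1) = b (i.1 + lam (Fin.rev i).castSucc)
      rw [← hrev i]
      congr 1
      simp only [hg, Fin.val_succ]
      omega
    rw [hmu, schur_reduce n lam h0]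
    exact (hφ (fun j => lam j.castSucc)
      (fun a b hab => hlam (Fin.castSucc_le_castSucc_iff.mpr hab))).symm
  · -- last part positive: both sides vanish
    have hc : contract (beta 0) (bwedge (n + 1) lam) = 0 := by
      rw [hbw, hofn]
      refine contract_prod_zero _ ?_
      intro j hj
      rcases List.mem_cons.mp hj with h | h
      · subst h
        rw [hg0]
        exact h0
      · have := htpos j h
        omega
    have hpos : ∀ j, 1 ≤ lam j := by
      intro j
      have h1 := hlam (Fin.le_last j)
      omega
    rw [hc, map_zero, smul_zero, schur_vanish n lam hpos, map_zero]
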